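/- arXiv:1203.1527 — 2 statements merged into one kernel-verified Lean document; each statement's English description precedes it below -/
import Mathlib

section
/- Let C be a binary linear code of length 48 and dimension 10 that contains the all-one vector, and suppose every nonzero codeword of C has weight in {20, 28, 48}. Then no such C exists; in particular, any self-complementary [48,10,20] code with doubly-even weights must contain a codeword of weight 24. -/
/-!
Write `χ(z) = (-1)^z` on `ZMod 2`, so that `n - 2 wt c = ∑ᵢ χ(cᵢ)`. Squaring and summing over a
binary linear code `C` gives `∑_{c ∈ C} (n - 2 wt c)² = ∑_{i,j} ∑_{c ∈ C} χ(cᵢ + cⱼ)`, and each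
inner sum is a character sum over the group `C`, hence `|C|` or `0`. So `|C|` divides the second
weight moment `∑_{c ∈ C} (n - 2 wt c)²`.

For a self-complementary `[48, 10]` code with weights in `{20, 28, 48}` the summand is `8² = 64`
except at `0` and the all-one word, where it is `48²`; the moment `2¹⁰ · 64 + 2 · 2240` is not
divisible by `2¹⁰`. If the minimum distance is `20`, complementation puts every weight other than
`0` and `48` into `[20, 28]`, so a doubly-even such code without weight `24` has weights in
`{20, 28, 48}`.
-/

/-- Hamming weight of a binary vector. -/
def wt {n : ℕ} (x : Fin n → ZMod 2) : ℕ :=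
  (Finset.univ.filter fun i => x i ≠ 0).card

/-- Dual code with respect to the standard bilinear form. -/
def dualCode {n : ℕ} (C : Submodule (ZMod 2) (Fin n → ZMod 2)) :
    Submodule (ZMod 2) (Fin n → ZMod 2) where
  carrier := {x | ∀ c ∈ C, ∑ i, x i * c i = 0}
  add_mem' := by
    intro a b ha hb c hc
    have ha' := ha c hc
    have hb' := hb c hc
    simp only [Set.mem_setOf_eq, Pi.add_apply, add_mul] at *
    rw [Finset.sum_add_distrib, ha', hb', add_zero]
  zero_mem' := by
    intro c hc
    simp
  smul_mem' := by
    intro r a ha c hc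
    have ha' := ha c hc
    simp only [Set.mem_setOf_eq, Pi.smul_apply, smul_eq_mul, mul_assoc] at *
    rw [← Finset.mul_sum, ha', mul_zero]

/-- Minimum distance (minimum nonzero Hamming weight) of a binary linear code. -/
noncomputable def minDist {n : ℕ} (C : Submodule (ZMod 2) (Fin n → ZMod 2)) : ℕ :=
  sInf {w | ∃ c ∈ C, c ≠ 0 ∧ wt c = w}

/-- Number of codewords of weight `w` in `C` (the weight distribution `A_w`). -/
noncomputable def wtCount {n : ℕ} (C : Submodule (ZMod 2) (Fin n → ZMod 2)) (w : ℕ) : ℕ :=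
  Nat.card {c : Fin n → ZMod 2 // c ∈ C ∧ wt c = w}

open Finset

def signChar : AddChar (ZMod 2) ℤ where
  toFun z := if z = 0 then 1 else -1
  map_zero_eq_one' := rfl
  map_add_eq_mul' := by decide

lemma signChar_apply (z : ZMod 2) : signChar z = if z = 0 then 1 else -1 := rfl

lemma card_dvd_sum_signChar_comp {G : Type*} [AddGroup G] [Fintype G] (φ : G →+ ZMod 2) :
    (Fintype.card G : ℤ) ∣ ∑ g, signChar (φ g) := by
  classical
  have h := AddChar.sum_eq_ite (signChar.compAddMonoidHom φ)
  simp only [AddChar.compAddMonoidHom_apply] at h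
  rw [h]
  split_ifs <;> simp

section Weight

variable {n : ℕ}

lemma sum_signChar_eq_sub_two_mul_wt (c : Fin n → ZMod 2) :
    ∑ i, signChar (c i) = (n : ℤ) - 2 * wt c := by
  have h : ∀ i, signChar (c i) = 1 - 2 * if c i ≠ 0 then 1 else 0 := by
    intro i; by_cases h : c i = 0 <;> simp [signChar_apply, h]
  simp only [h, sum_sub_distrib, sum_const, ← mul_sum, sum_boole]
  simp [wt]

lemma sub_two_mul_wt_sq (c : Fin n → ZMod 2) :
    ((n : ℤ) - 2 * wt c) ^ 2 = ∑ i, ∑ j, signChar (c i + c j) := by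
  rw [← sum_signChar_eq_sub_two_mul_wt, sq, sum_mul_sum]
  simp only [AddChar.map_add_eq_mul]

theorem card_dvd_sum_sub_two_mul_wt_sq (C : Submodule (ZMod 2) (Fin n → ZMod 2)) [Fintype C] :
    (Fintype.card C : ℤ) ∣ ∑ c : C, ((n : ℤ) - 2 * wt (c : Fin n → ZMod 2)) ^ 2 := by
  simp only [sub_two_mul_wt_sq]
  rw [sum_comm]
  refine dvd_sum fun i _ => ?_
  rw [sum_comm]
  refine dvd_sum fun j _ => ?_
  exact card_dvd_sum_signChar_comp
    ((Pi.evalAddMonoidHom (fun _ => ZMod 2) i + Pi.evalAddMonoidHom (fun _ => ZMod 2) j).comp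
      C.subtype.toAddMonoidHom)

lemma wt_le (c : Fin n → ZMod 2) : wt c ≤ n :=
  (card_filter_le _ _).trans_eq (card_fin n)

@[simp]
lemma wt_zero : wt (0 : Fin n → ZMod 2) = 0 := by simp [wt]

lemma wt_add_one (c : Fin n → ZMod 2) : wt (c + 1) = n - wt c := by
  have h : ∀ a : ZMod 2, a + 1 ≠ 0 ↔ a = 0 := by decide
  have := card_filter_add_card_filter_not (s := (univ : Finset (Fin n))) (fun i => c i ≠ 0)
  simp only [wt, Pi.add_apply, Pi.one_apply, h, not_not, card_univ, Fintype.card_fin] at this ⊢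
  omega

@[simp]
lemma wt_one : wt (1 : Fin n → ZMod 2) = n := by simp [wt]

lemma eq_one_of_wt_eq (c : Fin n → ZMod 2) (h : wt c = n) : c = 1 := by
  have hc : #(univ.filter fun i => c i ≠ 0) = #(univ : Finset (Fin n)) := by
    rw [card_univ, Fintype.card_fin]; exact h
  exact funext fun i => Fin.eq_one_of_ne_zero _ (card_filter_eq_iff.mp hc i (mem_univ i))

lemma minDist_le_wt {C : Submodule (ZMod 2) (Fin n → ZMod 2)} {c : Fin n → ZMod 2}
    (hc : c ∈ C) (h0 : c ≠ 0) : minDist C ≤ wt c :=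
  Nat.sInf_le ⟨c, hc, h0, rfl⟩

lemma wt_le_sub_minDist {C : Submodule (ZMod 2) (Fin n → ZMod 2)} (hone : 1 ∈ C)
    {c : Fin n → ZMod 2} (hc : c ∈ C) (h1 : c ≠ 1) : wt c ≤ n - minDist C := by
  have h0 : c + 1 ≠ 0 := by
    have h : ∀ a : ZMod 2, a + 1 = 0 → a = 1 := by decide
    exact fun hz => h1 (funext fun i => h _ (congrFun hz i))
  have hmin := minDist_le_wt (C.add_mem hc hone) h0
  rw [wt_add_one] at hmin
  have := wt_le c
  omega

end Weight

theorem not_exists_selfComplementary_weights_20_28_48 :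
    ¬ ∃ C : Submodule (ZMod 2) (Fin 48 → ZMod 2),
      Module.finrank (ZMod 2) C = 10 ∧ (fun _ => (1 : ZMod 2)) ∈ C ∧
      ∀ c ∈ C, c ≠ 0 → wt c ∈ ({20, 28, 48} : Set ℕ) := by
  rintro ⟨C, hrank, hone, hwt⟩
  let _ : Fintype C := Fintype.ofFinite C
  have hcard : Fintype.card C = 2 ^ 10 := by
    rw [Module.card_eq_pow_finrank (K := ZMod 2), hrank, ZMod.card]
  have hmoment : ∑ c : C, ((48 : ℤ) - 2 * wt (c : Fin 48 → ZMod 2)) ^ 2 =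
      2 ^ 10 * 64 + 2 * 2240 := by
    let one : C := ⟨1, hone⟩
    -- `(48 - 2w)² - 64 = 4 (w - 20) (w - 28)` vanishes off the words `0` and `1`.
    have hsplit : ∀ c : C, ((48 : ℤ) - 2 * wt (c : Fin 48 → ZMod 2)) ^ 2 =
        64 + (((48 : ℤ) - 2 * wt (c : Fin 48 → ZMod 2)) ^ 2 - 64) := fun _ => by ring
    rw [sum_congr rfl fun c _ => hsplit c, sum_add_distrib, sum_const, card_univ, hcard,
      Fintype.sum_eq_add 0 one ?_ ?_]
    · simp [one]
    · intro h
      simpa [one] using congrFun (congrArg Subtype.val h) 0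
    · rintro c ⟨h0, h1⟩
      rcases hwt c c.2 (by simpa using h0) with h | h | h
      · simp [h]
      · simp [h]
      · exact absurd (Subtype.ext (eq_one_of_wt_eq _ h)) h1
  have hdvd := card_dvd_sum_sub_two_mul_wt_sq C
  simp only [Nat.cast_ofNat, hcard, hmoment] at hdvd
  norm_num at hdvd

lemma wt_mem_of_minDist_eq_twenty_of_doublyEven {C : Submodule (ZMod 2) (Fin 48 → ZMod 2)}
    (hone : 1 ∈ C) (hmin : minDist C = 20) (hdiv : ∀ c ∈ C, 4 ∣ wt c)
    (h24 : ∀ c ∈ C, wt c ≠ 24) {c : Fin 48 → ZMod 2} (hc : c ∈ C) (h0 : c ≠ 0) :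
    wt c ∈ ({20, 28, 48} : Set ℕ) := by
  by_cases h1 : c = 1
  · simp [h1]
  have hlo := minDist_le_wt hc h0
  have hhi := wt_le_sub_minDist hone hc h1
  have h4 := hdiv c hc
  have hne := h24 c hc
  simp only [Set.mem_insert_iff, Set.mem_singleton_iff]
  omega

/-- There is no self-complementary binary [48,10] code whose nonzero codewords
all have weight in {20, 28, 48}; in particular any self-complementary
doubly-even [48,10,20] code contains a codeword of weight 24. -/
theorem stmt_3 :
    (¬ ∃ C : Submodule (ZMod 2) (Fin 48 → ZMod 2),
      Module.finrank (ZMod 2) C = 10 ∧ (fun _ => (1 : ZMod 2)) ∈ C ∧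
      ∀ c ∈ C, c ≠ 0 → wt c ∈ ({20, 28, 48} : Set ℕ)) ∧
    ∀ C : Submodule (ZMod 2) (Fin 48 → ZMod 2),
      Module.finrank (ZMod 2) C = 10 → (fun _ => (1 : ZMod 2)) ∈ C →
      minDist C = 20 → (∀ c ∈ C, 4 ∣ wt c) → ∃ c ∈ C, wt c = 24 := by
  refine ⟨not_exists_selfComplementary_weights_20_28_48, fun C hrank hone hmin hdiv => ?_⟩
  by_contra! h24
  exact not_exists_selfComplementary_weights_20_28_48 ⟨C, hrank, hone,
    fun c hc h0 => wt_mem_of_minDist_eq_twenty_of_doublyEven hone hmin hdiv h24 hc h0⟩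
end

section
/- Up to permutation equivalence, there is a unique binary linear [28,3] code all of whose nonzero codewords have Hamming weight exactly 16. -/
/-!
Present a `k`-dimensional code as the image of `l ↦ (G i ⬝ᵥ l)ᵢ` for rows `G i ∈ 𝔽₂ᵏ`. Writing
`s(x) = (-1)ˣ`, the weight of the codeword of `l` is `∑ᵢ (1 - s(G i ⬝ᵥ l)) / 2`, and orthogonality of
the characters `l ↦ s(v ⬝ᵥ l)` inverts this: the number of rows equal to `v` is determined by the
weights of all codewords. Two codes of the same dimension and the same constant weight therefore
have generator matrices with the same multiset of rows, i.e. differing by a permutation of the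
coordinates. A code with the required weights repeats each nonzero vector of `𝔽₂³` four times.
-/

open Finset Matrix

lemma Fintype.exists_perm_comp_eq_of_card_fiber_eq {α β : Type*} [Fintype α] [DecidableEq β]
    {f g : α → β} (h : ∀ b, #{a | f a = b} = #{a | g a = b}) :
    ∃ σ : Equiv.Perm α, ∀ a, f (σ a) = g a :=
  ⟨Equiv.ofFiberEquiv fun b => Fintype.equivOfCardEq <| by simp only [Fintype.card_subtype, h],
    Equiv.ofFiberEquiv_map _⟩

lemma Submodule.exists_range_toLin'_eq {F : Type*} [Field F] {n k : ℕ}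
    (C : Submodule F (Fin n → F)) (hC : Module.finrank F C = k) :
    ∃ G : Fin n → Fin k → F,
      LinearMap.range (toLin' (of G)) = C ∧ Function.Injective (toLin' (of G)) := by
  let e := LinearEquiv.ofFinrankEq (Fin k → F) C (by rw [Module.finrank_fin_fun, hC])
  refine ⟨of.symm (LinearMap.toMatrix' (C.subtype ∘ₗ e.toLinearMap)), ?_, ?_⟩
  all_goals rw [Equiv.apply_symm_apply, toLin'_toMatrix']
  · rw [LinearMap.range_comp, LinearEquiv.range, Submodule.map_top, Submodule.range_subtype]
  · exact Subtype.val_injective.comp e.injective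

lemma map_funLeft_range_toLin' {R : Type*} [CommRing R] {n k : ℕ} (G : Fin n → Fin k → R)
    (σ : Equiv.Perm (Fin n)) :
    (LinearMap.range (toLin' (of G))).map (LinearMap.funLeft R R σ) =
      LinearMap.range (toLin' (of (G ∘ σ))) := by
  rw [← LinearMap.range_comp]
  rfl

namespace BinaryCode

def sign (x : ZMod 2) : ℤ := (-1) ^ x.val

lemma sign_one : sign 1 = -1 := rfl

lemma sign_sub (x y : ZMod 2) : sign (x - y) = sign x * sign y := by
  revert x y; decide

lemma two_mul_ite_ne_zero (x : ZMod 2) : 2 * (if x ≠ 0 then 1 else 0 : ℤ) = 1 - sign x := by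
  revert x; decide

lemma wt_zero {n : ℕ} : wt (0 : Fin n → ZMod 2) = 0 := by
  simp [wt]

section Fourier

variable {κ : Type*} [Fintype κ] {n : ℕ}

lemma sum_sign_dotProduct [DecidableEq κ] (u : κ → ZMod 2) :
    ∑ l, sign (u ⬝ᵥ l) = if u = 0 then 2 ^ Fintype.card κ else 0 := by
  split_ifs with hu
  · simp [hu, sign, ZMod.card]
  obtain ⟨j, hj⟩ := Function.ne_iff.mp hu
  have huj : u ⬝ᵥ Pi.single j 1 = 1 := by
    rw [dotProduct_single, mul_one]
    exact Fin.eq_one_of_ne_zero _ hj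
  have hflip : ∑ l, sign (u ⬝ᵥ l) = -∑ l, sign (u ⬝ᵥ l) :=
    calc ∑ l, sign (u ⬝ᵥ l) = ∑ l, sign (u ⬝ᵥ (l - Pi.single j 1)) :=
          (Fintype.sum_equiv (Equiv.subRight (Pi.single j 1)) _ (fun l => sign (u ⬝ᵥ l))
            fun _ => rfl).symm
      _ = -∑ l, sign (u ⬝ᵥ l) := by
          simp only [dotProduct_sub, sign_sub, huj, sign_one, mul_neg_one, sum_neg_distrib]
  omega

lemma two_mul_wt_mulVec (G : Fin n → κ → ZMod 2) (l : κ → ZMod 2) :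
    2 * (wt (of G *ᵥ l) : ℤ) = ∑ i, (1 - sign (G i ⬝ᵥ l)) := by
  simp only [wt, card_filter, Nat.cast_sum, mul_sum, Nat.cast_ite, Nat.cast_one, Nat.cast_zero]
  exact sum_congr rfl fun i _ => two_mul_ite_ne_zero _

lemma pow_card_mul_card_fiber [DecidableEq κ] (G : Fin n → κ → ZMod 2) (v : κ → ZMod 2) :
    2 ^ Fintype.card κ * (#{i | G i = v} : ℤ) =
      2 ^ Fintype.card κ * (if v = 0 then n else 0) -
        ∑ l, sign (v ⬝ᵥ l) * (2 * wt (of G *ᵥ l)) := by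
  simp_rw [two_mul_wt_mulVec, mul_sum, mul_sub, mul_one, ← sign_sub, ← sub_dotProduct]
  rw [sum_comm]
  simp_rw [sum_sub_distrib, sum_sign_dotProduct, sub_eq_zero]
  split_ifs <;> simp [sum_ite, eq_comm] <;> ring

lemma card_fiber_eq_of_wt_mulVec_eq [DecidableEq κ] {G H : Fin n → κ → ZMod 2}
    (h : ∀ l, wt (of G *ᵥ l) = wt (of H *ᵥ l)) (v : κ → ZMod 2) :
    #{i | G i = v} = #{i | H i = v} := by
  have hG := pow_card_mul_card_fiber G v
  simp_rw [h, ← pow_card_mul_card_fiber H v] at hG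
  exact_mod_cast mul_left_cancel₀ (by positivity) hG

end Fourier

variable {n k : ℕ}

lemma injective_toLin'_of_wt_ne_zero {G : Fin n → Fin k → ZMod 2}
    (hG : ∀ l, l ≠ 0 → wt (of G *ᵥ l) ≠ 0) : Function.Injective (toLin' (of G)) := by
  refine (injective_iff_map_eq_zero _).mpr fun l hl => ?_
  by_contra h
  exact hG l h (by rw [← toLin'_apply, hl, wt_zero])

lemma finrank_range_toLin' {G : Fin n → Fin k → ZMod 2}
    (hG : ∀ l, l ≠ 0 → wt (of G *ᵥ l) ≠ 0) :
    Module.finrank (ZMod 2) (LinearMap.range (toLin' (of G))) = k := by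
  rw [LinearMap.finrank_range_of_inj (injective_toLin'_of_wt_ne_zero hG), Module.finrank_fin_fun]

lemma wt_eq_of_mem_range_toLin' {G : Fin n → Fin k → ZMod 2} {w : ℕ}
    (hG : ∀ l, l ≠ 0 → wt (of G *ᵥ l) = w) :
    ∀ c ∈ LinearMap.range (toLin' (of G)), c ≠ 0 → wt c = w := by
  rintro _ ⟨l, rfl⟩ hc
  refine hG l fun hl => hc ?_
  rw [hl, map_zero]

lemma wt_mulVec_eq_ite {C : Submodule (ZMod 2) (Fin n → ZMod 2)} {w : ℕ}
    (hC : ∀ c ∈ C, c ≠ 0 → wt c = w) {G : Fin n → Fin k → ZMod 2}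
    (hrange : LinearMap.range (toLin' (of G)) = C) (hinj : Function.Injective (toLin' (of G)))
    (l : Fin k → ZMod 2) : wt (of G *ᵥ l) = if l = 0 then 0 else w := by
  split_ifs with hl
  · rw [hl, mulVec_zero, wt_zero]
  · refine hC _ (hrange ▸ ⟨l, rfl⟩) ?_
    rw [← toLin'_apply, ← (toLin' (of G)).map_zero]
    exact hinj.ne hl

theorem exists_perm_map_eq_of_constant_wt {C D : Submodule (ZMod 2) (Fin n → ZMod 2)} {w : ℕ}
    (hCD : Module.finrank (ZMod 2) C = Module.finrank (ZMod 2) D)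
    (hC : ∀ c ∈ C, c ≠ 0 → wt c = w) (hD : ∀ c ∈ D, c ≠ 0 → wt c = w) :
    ∃ σ : Equiv.Perm (Fin n), C.map (LinearMap.funLeft (ZMod 2) (ZMod 2) σ) = D := by
  obtain ⟨G, hGC, hG⟩ := C.exists_range_toLin'_eq rfl
  obtain ⟨H, hHD, hH⟩ := D.exists_range_toLin'_eq hCD.symm
  have hwt l : wt (of G *ᵥ l) = wt (of H *ᵥ l) := by
    rw [wt_mulVec_eq_ite hC hGC hG, wt_mulVec_eq_ite hD hHD hH]
  obtain ⟨σ, hσ⟩ :=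
    Fintype.exists_perm_comp_eq_of_card_fiber_eq (card_fiber_eq_of_wt_mulVec_eq hwt)
  refine ⟨σ, ?_⟩
  rw [← hGC, ← hHD, map_funLeft_range_toLin', show G ∘ σ = H from funext hσ]

/-- Row `i` is the binary expansion of `⌊i / 4⌋ + 1`. -/
def simplexRep : Fin 28 → Fin 3 → ZMod 2 := fun i j => (((i : ℕ) / 4 + 1) / 2 ^ (j : ℕ) : ℕ)

lemma wt_mulVec_simplexRep : ∀ l, l ≠ 0 → wt (of simplexRep *ᵥ l) = 16 := by
  decide

end BinaryCode

/-- Up to permutation equivalence there is a unique binary [28,3] code all of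
whose nonzero codewords have weight 16. -/
theorem stmt_7 :
    (∃ C : Submodule (ZMod 2) (Fin 28 → ZMod 2),
      Module.finrank (ZMod 2) C = 3 ∧ ∀ c ∈ C, c ≠ 0 → wt c = 16) ∧
    ∀ C D : Submodule (ZMod 2) (Fin 28 → ZMod 2),
      Module.finrank (ZMod 2) C = 3 → (∀ c ∈ C, c ≠ 0 → wt c = 16) →
      Module.finrank (ZMod 2) D = 3 → (∀ c ∈ D, c ≠ 0 → wt c = 16) →
      ∃ σ : Equiv.Perm (Fin 28),
        Submodule.map (LinearMap.funLeft (ZMod 2) (ZMod 2) σ) C = D := by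
  have hwt := BinaryCode.wt_mulVec_simplexRep
  refine ⟨⟨_, BinaryCode.finrank_range_toLin' fun l hl => (hwt l hl).trans_ne (by norm_num),
      BinaryCode.wt_eq_of_mem_range_toLin' hwt⟩,
    fun C D hC hCw hD hDw => BinaryCode.exists_perm_map_eq_of_constant_wt (hC.trans hD.symm) hCw hDw⟩
end
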